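/- Consider a function P on GF(2)^8 (variables e,f,g,h and four shifted copies) and the one-round map ψ on GF(2)^4 given by (e,f,g,h) ↦ (Z ⊕ h, e, f, g) for an arbitrary value Z ∈ GF(2) possibly depending on other state. Then the polynomial P = h⊕g⊕f⊕e⊕gh⊕fh⊕eh⊕fg⊕eg⊕ef⊕fgh⊕egh⊕efh⊕efg⊕efgh satisfies: P(ψ(e,f,g,h)) = P(e,f,g,h) ⊕ Z·(1⊕g⊕f⊕e⊕fg⊕eg⊕ef⊕efg), i.e., P is invariant whenever Z·(1⊕e)(1⊕f)(1⊕g) = 0. -/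

import Mathlib

/-- The degree-≤4 polynomial `P` on `GF(2)^4` from Theorem 5.3.2. -/
def P (e f g h : ZMod 2) : ZMod 2 :=
  h + g + f + e + g*h + f*h + e*h + f*g + e*g + e*f
    + f*g*h + e*g*h + e*f*h + e*f*g + e*f*g*h

theorem P_eq_prod_one_add_sub_one (e f g h : ZMod 2) :
    P e f g h = (1 + e) * (1 + f) * (1 + g) * (1 + h) - 1 := by
  unfold P
  ring

/-- One-round substitution identity: applying the round update
`(e,f,g,h) ↦ (Z ⊕ h, e, f, g)` to `P` changes it by
`Z · (1 ⊕ g ⊕ f ⊕ e ⊕ fg ⊕ eg ⊕ ef ⊕ efg)`; in particular `P` is invariant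
whenever `Z · (1⊕e)(1⊕f)(1⊕g) = 0`. -/
theorem P_round_identity (e f g h Z : ZMod 2) :
    P (Z + h) e f g
      = P e f g h + Z * (1 + g + f + e + f*g + e*g + e*f + e*f*g) := by
  -- The shift permutes the factors `1 + e`, `1 + f`, `1 + g` and turns `1 + h` into `1 + (Z + h)`.
  rw [P_eq_prod_one_add_sub_one, P_eq_prod_one_add_sub_one]
  ring
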